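/- arXiv:1207.0198 — 3 statements merged into one kernel-verified Lean document; each statement's English description precedes it below -/
import Mathlib

section
/- For every prime p and every integer n ≥ 1, the polynomial P_p^{(n)}(X,1) divides R_p^{(n)}(X,1) in the polynomial ring ℤ[X]. -/
/-!
After `Y = 1`, the factor `j = 1` of `R_p^{(n)}` is `1 − p^n X`, and since
`2i(2n − 2i + 1)/2 = i(2n − 2i + 1)`, the factor `j = 2i` is `1 − (p^{2n−2i+1} X²)^i`, a multiple of
`1 − p^{2n−2i+1} X²`. For `1 ≤ i ≤ ⌊n/2⌋` the indices `1` and `2i` are distinct elements of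
`[1, n]`, so `P_p^{(n)}(X, 1)` divides the product of these factors of `R_p^{(n)}(X, 1)`.
-/

open MvPolynomial Finset

/-- The polynomial `P_p^{(n)}(X, Y) ∈ ℤ[X, Y]`, where `X 0` plays the role of `X` and
`X 1` plays the role of `Y`.  For `n ≥ 1` it is
`(1 − p^n·X·Y)·∏_{i=1}^{⌊n/2⌋}(1 − p^{2n−2i+1}·X²·Y)`, and `P_p^{(0)} := 1`. -/
noncomputable def Ppoly (p n : ℕ) : MvPolynomial (Fin 2) ℤ :=
  if n = 0 then 1
  else
    (1 - (p : MvPolynomial (Fin 2) ℤ) ^ n * X 0 * X 1) *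
      ∏ i ∈ Finset.Icc 1 (n / 2),
        (1 - (p : MvPolynomial (Fin 2) ℤ) ^ (2 * n - 2 * i + 1) * X 0 ^ 2 * X 1)

/-- The polynomial `R_p^{(n)}(X, Y) := ∏_{j=1}^{n}(1 − p^{j(2n−j+1)/2}·X^j·Y) ∈ ℤ[X, Y]`,
where `X 0` plays the role of `X` and `X 1` plays the role of `Y`; `R_p^{(0)} = 1`. -/
noncomputable def Rpoly (p n : ℕ) : MvPolynomial (Fin 2) ℤ :=
  ∏ j ∈ Finset.Icc 1 n,
    (1 - (p : MvPolynomial (Fin 2) ℤ) ^ (j * (2 * n - j + 1) / 2) * X 0 ^ j * X 1)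

/-- Substitution of `Y = 1`, turning a polynomial in `ℤ[X, Y]` into a one-variable
polynomial in `ℤ[X]`. -/
noncomputable def evalYone : MvPolynomial (Fin 2) ℤ →ₐ[ℤ] Polynomial ℤ :=
  MvPolynomial.aeval fun i => if i = 0 then Polynomial.X else 1

theorem mul_prod_Icc_two_mul_dvd_prod_Icc {M : Type*} [CommMonoid M] (f : ℕ → M) {n : ℕ}
    (hn : 1 ≤ n) : f 1 * ∏ i ∈ Icc 1 (n / 2), f (2 * i) ∣ ∏ j ∈ Icc 1 n, f j := by
  have h_one : 1 ∉ (Icc 1 (n / 2)).image (2 * ·) := by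
    simp only [mem_image, mem_Icc, not_exists, not_and]
    omega
  have h_inj : Set.InjOn (2 * ·) (Icc 1 (n / 2) : Set ℕ) := fun a _ b _ h ↦ by
    simpa using h
  rw [← prod_image h_inj, ← prod_insert h_one]
  refine prod_dvd_prod_of_subset _ _ f fun j hj ↦ ?_
  simp only [mem_insert, mem_image, mem_Icc] at hj ⊢
  rcases hj with rfl | ⟨i, hi, rfl⟩ <;> omega

namespace Polynomial

/-- The factor of index `j` of `R_p^{(n)}(X, 1)`. -/
noncomputable def rFactor (p n j : ℕ) : ℤ[X] :=
  1 - (p : ℤ[X]) ^ (j * (2 * n - j + 1) / 2) * X ^ j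

theorem evalYone_Rpoly (p n : ℕ) : evalYone (Rpoly p n) = ∏ j ∈ Icc 1 n, rFactor p n j := by
  simp [Rpoly, evalYone, rFactor]

theorem evalYone_Ppoly {p n : ℕ} (hn : n ≠ 0) :
    evalYone (Ppoly p n) = (1 - (p : ℤ[X]) ^ n * X) *
      ∏ i ∈ Icc 1 (n / 2), (1 - (p : ℤ[X]) ^ (2 * n - 2 * i + 1) * X ^ 2) := by
  simp [Ppoly, evalYone, hn]

theorem rFactor_one (p : ℕ) {n : ℕ} (hn : 1 ≤ n) : rFactor p n 1 = 1 - (p : ℤ[X]) ^ n * X := by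
  rw [rFactor, show 1 * (2 * n - 1 + 1) / 2 = n by omega, pow_one]

theorem rFactor_two_mul (p n i : ℕ) :
    rFactor p n (2 * i) = 1 - ((p : ℤ[X]) ^ (2 * n - 2 * i + 1) * X ^ 2) ^ i := by
  have hexp : 2 * i * (2 * n - 2 * i + 1) / 2 = (2 * n - 2 * i + 1) * i := by
    rw [mul_assoc, Nat.mul_div_cancel_left _ two_pos, mul_comm]
  rw [rFactor, hexp, mul_pow, ← pow_mul, ← pow_mul, mul_comm 2 i]

end Polynomial

open Polynomial in
theorem stmt_1_general (p : ℕ) (n : ℕ) :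
    evalYone (Ppoly p n) ∣ evalYone (Rpoly p n) := by
  obtain rfl | hn := Nat.eq_zero_or_pos n
  · simp [Ppoly]
  rw [evalYone_Ppoly hn.ne', evalYone_Rpoly, ← rFactor_one p hn]
  refine (mul_dvd_mul_left _ (prod_dvd_prod_of_dvd _ _ fun i _ ↦ ?_)).trans
    (mul_prod_Icc_two_mul_dvd_prod_Icc (rFactor p n) hn)
  rw [rFactor_two_mul]
  exact one_sub_dvd_one_sub_pow _ i

theorem stmt_1 (p : ℕ) (hp : p.Prime) (n : ℕ) (hn : 1 ≤ n) :
    evalYone (Ppoly p n) ∣ evalYone (Rpoly p n) :=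
  stmt_1_general p n
end

section
/- Let p be a prime and c an integer. For all integers a ≥ 0 and b ≥ 0, one has in ℤ[X] the identity K_{a+2,b+2}(X) − (p²·X + p³·X²)·K_{a+1,b+1}(X) + p⁵·X³·K_{a,b}(X) = 1 − c·p·X. -/
open Polynomial Finset

/-- Kaufhold's explicit polynomial
`K_{a,b}(X) := Σ_{i=0}^{a} (p²X)^i (Σ_{j=0}^{b−i} (p³X²)^j − c·p·X·Σ_{j=0}^{b−i−1} (p³X²)^j)`
in `ℤ[X]`, where any sum `Σ_{j=0}^{t}` with `t < 0` is interpreted as `0`.  (Note that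
`b + 1 - i = 0` in `ℕ` exactly when `i > b`, and `b - i = 0` in `ℕ` when `i ≥ b`, so the
truncated natural subtractions below implement this convention.) -/
noncomputable def Kpoly (p : ℕ) (c : ℤ) (a b : ℕ) : Polynomial ℤ :=
  ∑ i ∈ Finset.range (a + 1),
    ((p : Polynomial ℤ) ^ 2 * X) ^ i *
      ((∑ j ∈ Finset.range (b + 1 - i), ((p : Polynomial ℤ) ^ 3 * X ^ 2) ^ j) -
        C c * (p : Polynomial ℤ) * X *
          ∑ j ∈ Finset.range (b - i), ((p : Polynomial ℤ) ^ 3 * X ^ 2) ^ j)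

/-! Splitting off the term `i = 0` of the outer sum gives
`K_{a+1,b+1} = K_{0,b+1} + p²X·K_{a,b}`. Substituting this twice, the left-hand side collapses to
`K_{0,b+2} − p³X²·K_{0,b+1}`, and in `K_{0,b} = Σ_{j ≤ b} (p³X²)^j − cpX·Σ_{j < b} (p³X²)^j` the
two geometric sums telescope to `1 − cpX`. -/

theorem Kpoly_zero (p : ℕ) (c : ℤ) (b : ℕ) :
    Kpoly p c 0 b =
      (∑ j ∈ range (b + 1), ((p : ℤ[X]) ^ 3 * X ^ 2) ^ j) -
        C c * (p : ℤ[X]) * X * ∑ j ∈ range b, ((p : ℤ[X]) ^ 3 * X ^ 2) ^ j := by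
  simp only [Kpoly, zero_add, sum_range_one, pow_zero, one_mul, Nat.sub_zero]

theorem Kpoly_succ_succ (p : ℕ) (c : ℤ) (a b : ℕ) :
    Kpoly p c (a + 1) (b + 1) = Kpoly p c 0 (b + 1) + (p : ℤ[X]) ^ 2 * X * Kpoly p c a b := by
  rw [Kpoly, sum_range_succ', add_comm, Kpoly_zero, Kpoly, mul_sum (range (a + 1))]
  refine congrArg₂ (· + ·) ?_ (sum_congr rfl fun i _ => ?_)
  · rw [pow_zero, one_mul, Nat.sub_zero, Nat.sub_zero]
  · rw [Nat.add_sub_add_right, Nat.add_sub_add_right]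
    ring

theorem Kpoly_zero_succ_sub (p : ℕ) (c : ℤ) (b : ℕ) :
    Kpoly p c 0 (b + 1) - (p : ℤ[X]) ^ 3 * X ^ 2 * Kpoly p c 0 b = 1 - C c * (p : ℤ[X]) * X := by
  rw [Kpoly_zero, Kpoly_zero, geom_sum_succ (n := b + 1), geom_sum_succ (n := b)]
  ring

theorem stmt_7_general (p : ℕ) (c : ℤ) (a b : ℕ) :
    Kpoly p c (a + 2) (b + 2) -
        ((p : Polynomial ℤ) ^ 2 * X + (p : Polynomial ℤ) ^ 3 * X ^ 2) *
          Kpoly p c (a + 1) (b + 1) +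
        (p : Polynomial ℤ) ^ 5 * X ^ 3 * Kpoly p c a b =
      1 - C c * (p : Polynomial ℤ) * X := by
  rw [Kpoly_succ_succ p c (a + 1) (b + 1), Kpoly_succ_succ p c a b]
  linear_combination Kpoly_zero_succ_sub p c (b + 1)

theorem stmt_7 (p : ℕ) (hp : p.Prime) (c : ℤ) (a b : ℕ) :
    Kpoly p c (a + 2) (b + 2) -
        ((p : Polynomial ℤ) ^ 2 * X + (p : Polynomial ℤ) ^ 3 * X ^ 2) *
          Kpoly p c (a + 1) (b + 1) +
        (p : Polynomial ℤ) ^ 5 * X ^ 3 * Kpoly p c a b =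
      1 - C c * (p : Polynomial ℤ) * X :=
  stmt_7_general p c a b
end

section
/- Let p be a prime, n ≥ 2 an even integer, and κ an integer with κ > n+1. Define rational numbers ψ₀ := p^{(n/2)(κ−n/2) − (n/2)((n/2)+1)/2}, ψ_i := p^{−κ+n/2+i} for 1 ≤ i ≤ n/2, and ψ_i := p^{κ−n+i−1} for n/2+1 ≤ i ≤ n, and define the polynomial Q(Y) := (1 − ψ₀·Y) · ∏_{S}(1 − ψ₀·(∏_{i∈S} ψ_i)·Y) ∈ ℚ[Y], where the product runs over all nonempty subsets S of {1,…,n}. Then the polynomial (1 − ψ₀·Y)·(1 − Y)·∏_{j=1}^{n}(1 − p^{jκ−j(j+1)/2}·Y) divides Q(Y) in ℚ[Y]. -/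
open Polynomial Finset

/-- The Satake parameters `ψ₀, ψ₁, …, ψ_n` at `p` of the Siegel Eisenstein series of even
genus `n` and weight `κ`:  `ψ₀ = p^{(n/2)(κ−n/2) − (n/2)((n/2)+1)/2}`,
`ψ_i = p^{−κ+n/2+i}` for `1 ≤ i ≤ n/2` and `ψ_i = p^{κ−n+i−1}` for `n/2+1 ≤ i ≤ n`. -/
noncomputable def satake (p n κ : ℕ) : ℕ → ℚ := fun i =>
  if i = 0 then
    (p : ℚ) ^ (((n / 2 : ℕ) : ℤ) * ((κ : ℤ) - ((n / 2 : ℕ) : ℤ)) -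
      ((n / 2 : ℕ) : ℤ) * (((n / 2 : ℕ) : ℤ) + 1) / 2)
  else if i ≤ n / 2 then
    (p : ℚ) ^ ((i : ℤ) + ((n / 2 : ℕ) : ℤ) - (κ : ℤ))
  else
    (p : ℚ) ^ ((κ : ℤ) - (n : ℤ) + (i : ℤ) - 1)

/-- The Hecke polynomial `Q(Y) = (1 − ψ₀Y)·∏_{∅ ≠ S ⊆ {1,…,n}}(1 − ψ₀(∏_{i∈S}ψ_i)Y)` of the
Siegel Eisenstein series at `p`. -/
noncomputable def heckeQ (p n κ : ℕ) : Polynomial ℚ :=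
  (1 - C (satake p n κ 0) * X) *
    ∏ S ∈ (Finset.Icc 1 n).powerset.filter Finset.Nonempty,
      (1 - C (satake p n κ 0 * ∏ i ∈ S, satake p n κ i) * X)

/-!
Write `n = 2h`. Since `ψ₀ψ₁⋯ψ_h = 1`, the subset `S₀ = {1,…,h}` contributes the factor `1 − Y`.
Along the chain `S_j = {j−h+1,…,h} ∪ {2h−j+1,…,2h}`, `0 ≤ j ≤ 2h`, one first adds
`ψ_{2h−j} = p^{κ−j−1}` and then removes `ψ_{j−h+1} = p^{−(κ−j−1)}`, so in both phases
`ψ₀ ∏_{S_{j+1}} ψ = p^{κ−j−1} · ψ₀ ∏_{S_j} ψ`, whence `ψ₀ ∏_{S_j} ψ = p^{jκ − j(j+1)/2}`.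
These exponents increase strictly because `κ > 2h + 1`, so the `S_j` are distinct nonempty
subsets, and their `2h + 1` factors of `Q` give `(1 − Y) ∏_{j=1}^{n} (1 − p^{jκ − j(j+1)/2} Y)`.
-/

theorem Finset.prod_comp_dvd_prod {ι κ M : Type*} [CommMonoid M] {s : Finset ι} {t : Finset κ}
    {g : ι → κ} (hmaps : Set.MapsTo g s t) (hinj : Set.InjOn g s) (f : κ → M) :
    ∏ i ∈ s, f (g i) ∣ ∏ k ∈ t, f k := by
  classical
  rw [← prod_image hinj]
  exact prod_dvd_prod_of_subset _ _ _ (coe_subset.1 (by simpa using hmaps.image_subset))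

theorem prod_zpow_eq_zpow_sum {ι G₀ : Type*} [CommGroupWithZero G₀] {a : G₀} (ha : a ≠ 0)
    (s : Finset ι) (e : ι → ℤ) : ∏ i ∈ s, a ^ e i = a ^ ∑ i ∈ s, e i := by
  classical
  induction s using Finset.induction_on with
  | empty => simp
  | insert i s hi ih => rw [prod_insert hi, sum_insert hi, zpow_add₀ ha, ih]

theorem sum_Ioc_zero_natCast_mul_two (k : ℕ) : (∑ i ∈ Ioc 0 k, (i : ℤ)) * 2 = k * (k + 1) := by
  induction k with
  | zero => simp
  | succ k ih =>
    rw [sum_Ioc_succ_top (Nat.zero_le k), add_mul, ih]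
    push_cast
    ring

/-- `p ^ heckeExp κ j` is the `j`-th inverse root of `R_p^{(n)}(p^{κ−n−1}, Y)`. -/
def heckeExp (κ j : ℕ) : ℕ := j * κ - j * (j + 1) / 2

theorem heckeExp_zero (κ : ℕ) : heckeExp κ 0 = 0 := by
  simp [heckeExp]

theorem heckeExp_succ {κ j : ℕ} (hj : j < κ) :
    heckeExp κ (j + 1) = heckeExp κ j + (κ - (j + 1)) := by
  have hdiv : (j + 1) * (j + 1 + 1) / 2 = j * (j + 1) / 2 + (j + 1) := by
    rw [show (j + 1) * (j + 1 + 1) = j * (j + 1) + 2 * (j + 1) by ring,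
      Nat.add_mul_div_left _ _ two_pos]
  have hle : j * (j + 1) / 2 ≤ j * κ :=
    (Nat.div_le_self _ _).trans (Nat.mul_le_mul_left j hj)
  have hmul : (j + 1) * κ = j * κ + κ := by ring
  unfold heckeExp
  omega

theorem heckeExp_strictMonoOn {κ N : ℕ} (hN : N < κ) : StrictMonoOn (heckeExp κ) (Set.Iic N) :=
  strictMonoOn_Iic_of_lt_succ fun j hj => by
    rw [Order.succ_eq_add_one, heckeExp_succ (by omega)]
    omega

-- The subtractions truncate: this is `{1,…,h} ∪ {2h−j+1,…,2h}` for `j ≤ h`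
-- and `{j−h+1,…,2h}` for `h ≤ j`.
def satakeChain (h j : ℕ) : Finset ℕ := Ioc (j - h) h ∪ Ioc (h + (h - j)) (h + h)

section SatakeChain

variable {h j : ℕ}

theorem satakeChain_zero (h : ℕ) : satakeChain h 0 = Ioc 0 h := by
  ext i
  simp only [satakeChain, mem_union, mem_Ioc]
  omega

theorem add_sub_notMem_satakeChain (hj : j < h) : h + h - j ∉ satakeChain h j := by
  simp only [satakeChain, mem_union, mem_Ioc]
  omega

theorem satakeChain_succ_of_lt (hj : j < h) :
    satakeChain h (j + 1) = insert (h + h - j) (satakeChain h j) := by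
  ext i
  simp only [satakeChain, mem_insert, mem_union, mem_Ioc]
  omega

theorem sub_add_one_notMem_satakeChain_succ (hj : h ≤ j) (hj' : j < h + h) :
    j - h + 1 ∉ satakeChain h (j + 1) := by
  simp only [satakeChain, mem_union, mem_Ioc]
  omega

theorem satakeChain_of_le (hj : h ≤ j) (hj' : j < h + h) :
    satakeChain h j = insert (j - h + 1) (satakeChain h (j + 1)) := by
  ext i
  simp only [satakeChain, mem_insert, mem_union, mem_Ioc]
  omega

theorem satakeChain_mem (hh : 1 ≤ h) (hj : j ≤ h + h) :
    satakeChain h j ∈ (Icc 1 (h + h)).powerset.filter Finset.Nonempty := by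
  simp only [mem_filter, mem_powerset]
  refine ⟨fun i hi => ?_, ⟨j - h + 1, ?_⟩⟩ <;>
    simp only [satakeChain, mem_union, mem_Ioc, mem_Icc] at * <;> omega

end SatakeChain

section Satake

variable {p h κ : ℕ}

theorem satake_zero : satake p (h + h) κ 0 = (p : ℚ) ^ ((h : ℤ) * (κ - h) - h * (h + 1) / 2) := by
  simp [satake, show (h + h) / 2 = h by omega]

theorem satake_of_le {i : ℕ} (hi0 : i ≠ 0) (hi : i ≤ h) :
    satake p (h + h) κ i = (p : ℚ) ^ ((i : ℤ) + h - κ) := by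
  simp [satake, hi0, show (h + h) / 2 = h by omega, hi]

theorem satake_of_lt {i : ℕ} (hi : h < i) :
    satake p (h + h) κ i = (p : ℚ) ^ ((κ : ℤ) - (h + h) + i - 1) := by
  simp [satake, show i ≠ 0 by omega, show (h + h) / 2 = h by omega, show ¬ i ≤ h by omega]

theorem satake_zero_mul_prod_Ioc (hp : p ≠ 0) :
    satake p (h + h) κ 0 * ∏ i ∈ Ioc 0 h, satake p (h + h) κ i = 1 := by
  have hp' : (p : ℚ) ≠ 0 := Nat.cast_ne_zero.2 hp
  obtain ⟨s, hs⟩ : ∃ s, ∑ i ∈ Ioc 0 h, (i : ℤ) = s := ⟨_, rfl⟩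
  have hdiv : (h : ℤ) * (h + 1) / 2 = s := by
    rw [← sum_Ioc_zero_natCast_mul_two, hs, Int.mul_ediv_cancel _ two_ne_zero]
  have hsum : ∑ i ∈ Ioc 0 h, ((i : ℤ) + h - κ) = s + h * (h - κ) := by
    simp only [sum_sub_distrib, sum_add_distrib, hs, sum_const, Nat.card_Ioc, Nat.sub_zero,
      nsmul_eq_mul]
    ring
  rw [prod_congr rfl fun i hi => satake_of_le (mem_Ioc.1 hi).1.ne' (mem_Ioc.1 hi).2,
    prod_zpow_eq_zpow_sum hp', satake_zero, ← zpow_add₀ hp', hsum, hdiv]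
  convert zpow_zero (p : ℚ) using 2
  ring


theorem satake_add_sub_of_lt {j : ℕ} (hj : j < h) (hκ : h + h < κ) :
    satake p (h + h) κ (h + h - j) = (p : ℚ) ^ (κ - (j + 1)) := by
  rw [satake_of_lt (by omega), ← zpow_natCast]
  congr 1
  omega

theorem satake_sub_add_one_of_le {j : ℕ} (hj : h ≤ j) (hj' : j < h + h) (hκ : j < κ) :
    satake p (h + h) κ (j - h + 1) = ((p : ℚ) ^ (κ - (j + 1)))⁻¹ := by
  rw [satake_of_le (by omega) (by omega), ← zpow_natCast, ← zpow_neg]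
  congr 1
  omega

theorem satake_zero_mul_prod_satakeChain (hp : p ≠ 0) (hκ : h + h < κ) :
    ∀ j ≤ h + h, satake p (h + h) κ 0 * ∏ i ∈ satakeChain h j, satake p (h + h) κ i =
      (p : ℚ) ^ heckeExp κ j
  | 0, _ => by rw [satakeChain_zero, satake_zero_mul_prod_Ioc hp, heckeExp_zero, pow_zero]
  | j + 1, hj => by
    have ih := satake_zero_mul_prod_satakeChain hp hκ j (by omega)
    rw [heckeExp_succ (by omega), pow_add]
    rcases lt_or_ge j h with hjh | hjh
    · rw [satakeChain_succ_of_lt hjh, prod_insert (add_sub_notMem_satakeChain hjh),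
        satake_add_sub_of_lt hjh hκ, mul_left_comm, ih, mul_comm]
    · rw [satakeChain_of_le hjh (by omega),
        prod_insert (sub_add_one_notMem_satakeChain_succ hjh (by omega)),
        satake_sub_add_one_of_le hjh (by omega) (by omega), mul_left_comm,
        inv_mul_eq_iff_eq_mul₀ (pow_ne_zero _ (Nat.cast_ne_zero.2 hp))] at ih
      rw [ih, mul_comm]

theorem satakeChain_injOn (hp : 1 < p) (hκ : h + h < κ) :
    Set.InjOn (satakeChain h) (Set.Iic (h + h)) := by
  intro i hi j hj hij
  have hpow := congrArg (fun S => satake p (h + h) κ 0 * ∏ i ∈ S, satake p (h + h) κ i) hij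
  have hp0 : p ≠ 0 := by omega
  simp only [satake_zero_mul_prod_satakeChain hp0 hκ i hi,
    satake_zero_mul_prod_satakeChain hp0 hκ j hj] at hpow
  exact (heckeExp_strictMonoOn hκ).injOn hi hj
    (pow_right_injective₀ (by positivity) (by exact_mod_cast hp.ne') hpow)

end Satake

theorem stmt_13 (p : ℕ) (hp : p.Prime) (n : ℕ) (hn : 2 ≤ n) (hneven : Even n)
    (κ : ℕ) (hκ : n + 1 < κ) :
    ((1 - C (satake p n κ 0) * X) * (1 - X) *
        ∏ j ∈ Finset.Icc 1 n, (1 - C ((p : ℚ) ^ (j * κ - j * (j + 1) / 2)) * X)) ∣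
      heckeQ p n κ := by
  obtain ⟨h, rfl⟩ := hneven
  have hκ' : h + h < κ := by omega
  have hchain := satake_zero_mul_prod_satakeChain hp.ne_zero hκ'
  have hroots : (1 - X) * ∏ j ∈ Icc 1 (h + h), (1 - C ((p : ℚ) ^ (j * κ - j * (j + 1) / 2)) * X) =
      ∏ j ∈ Icc 0 (h + h),
        (1 - C (satake p (h + h) κ 0 * ∏ i ∈ satakeChain h j, satake p (h + h) κ i) * X) := by
    rw [← insert_Icc_add_one_left_eq_Icc (Nat.zero_le _), prod_insert (by simp),
      hchain 0 (Nat.zero_le _), heckeExp_zero, pow_zero, C_1, one_mul]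
    congr 1
    refine prod_congr rfl fun j hj => ?_
    rw [hchain j (mem_Icc.1 hj).2, heckeExp]
  rw [heckeQ, mul_assoc, hroots]
  refine mul_dvd_mul_left _ (prod_comp_dvd_prod (fun j hj => ?_) ?_ _)
  · exact satakeChain_mem (by omega) (mem_Icc.1 hj).2
  · exact (satakeChain_injOn hp.one_lt hκ').mono fun j hj => (mem_Icc.1 hj).2
end
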